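/- arXiv:1011.2485 — 8 statements merged into one kernel-verified Lean document; each statement's English description precedes it below -/
import Mathlib

section
/- Let φ : ℂ → ℂ be an entire function and define f : M₂(ℂ) → M₂(ℂ) by f(x)₁₁ = x₁₁, f(x)₂₂ = x₂₂, f(x)₁₂ = e^{-φ(x₁₂x₂₁)}·x₁₂, f(x)₂₁ = e^{φ(x₁₂x₂₁)}·x₂₁. Then for every x ∈ M₂(ℂ), the spectrum of f(x) equals the spectrum of x (indeed f(x) and x have the same trace and the same determinant). -/
/-! For each `x`, `f x` is the conjugate of `x` by the invertible matrix
`diag(exp (-φ (x₁₂ x₂₁)), 1)`, and spectrum, trace and determinant are similarity invariants. -/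

open Matrix

def Matrix.diagFinTwoUnit {R : Type*} [CommRing R] (u : Rˣ) : (Matrix (Fin 2) (Fin 2) R)ˣ where
  val := !![(u : R), 0; 0, 1]
  inv := !![((u⁻¹ : Rˣ) : R), 0; 0, 1]
  val_inv := by simp [one_fin_two]
  inv_val := by simp [one_fin_two]

theorem Matrix.diagFinTwoUnit_conj {R : Type*} [CommRing R] (u : Rˣ)
    (A : Matrix (Fin 2) (Fin 2) R) :
    (diagFinTwoUnit u : Matrix (Fin 2) (Fin 2) R) * A *
        (↑(diagFinTwoUnit u)⁻¹ : Matrix (Fin 2) (Fin 2) R) =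
      !![A 0 0, u * A 0 1; ((u⁻¹ : Rˣ) : R) * A 1 0, A 1 1] := by
  rw [eta_fin_two A]
  simp [diagFinTwoUnit, mul_comm]

theorem spectrum_trace_det_preserved_general
    (φ : ℂ → ℂ)
    (f : Matrix (Fin 2) (Fin 2) ℂ → Matrix (Fin 2) (Fin 2) ℂ)
    (hf : ∀ x, f x = !![x 0 0, Complex.exp (-φ (x 0 1 * x 1 0)) * x 0 1;
                        Complex.exp (φ (x 0 1 * x 1 0)) * x 1 0, x 1 1]) :
    ∀ x : Matrix (Fin 2) (Fin 2) ℂ,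
      spectrum ℂ (f x) = spectrum ℂ x ∧ (f x).trace = x.trace ∧ (f x).det = x.det := by
  intro x
  set D := diagFinTwoUnit (Units.mk0 _ (Complex.exp_ne_zero (-φ (x 0 1 * x 1 0))))
  have hconj : f x = (D : Matrix (Fin 2) (Fin 2) ℂ) * x * (↑D⁻¹ : Matrix (Fin 2) (Fin 2) ℂ) := by
    rw [hf x, diagFinTwoUnit_conj]
    simp [Complex.exp_neg]
  rw [hconj]
  exact ⟨spectrum.units_conjugate, trace_units_conj D x, det_units_conj D x⟩

theorem spectrum_trace_det_preserved
    (φ : ℂ → ℂ) (hφ : Differentiable ℂ φ)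
    (f : Matrix (Fin 2) (Fin 2) ℂ → Matrix (Fin 2) (Fin 2) ℂ)
    (hf : ∀ x, f x = !![x 0 0, Complex.exp (-φ (x 0 1 * x 1 0)) * x 0 1;
                        Complex.exp (φ (x 0 1 * x 1 0)) * x 1 0, x 1 1]) :
    ∀ x : Matrix (Fin 2) (Fin 2) ℂ,
      spectrum ℂ (f x) = spectrum ℂ x ∧ (f x).trace = x.trace ∧ (f x).det = x.det :=
  spectrum_trace_det_preserved_general φ f hf
end

section
/- Let φ : ℂ → ℂ be an entire function and define f : M₂(ℂ) → M₂(ℂ) by f(x)₁₁ = x₁₁, f(x)₂₂ = x₂₂, f(x)₁₂ = e^{-φ(x₁₂x₂₁)}·x₁₂, f(x)₂₁ = e^{φ(x₁₂x₂₁)}·x₂₁. Then f maps Ω into Ω, where Ω = {x ∈ M₂(ℂ) : spectral radius of x < 1} is the spectral ball. -/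
open Matrix

/-- Rescaling the off-diagonal entries by `u⁻¹` and `u` is conjugation by `diag(1, u)`. -/
theorem Matrix.spectrum_fin_two_rescale_offDiag {R : Type*} [CommRing R] (u : Rˣ) (a b c d : R) :
    spectrum R !![a, ↑u⁻¹ * b; ↑u * c, d] = spectrum R !![a, b; c, d] := by
  let D : (Matrix (Fin 2) (Fin 2) R)ˣ :=
    { val := !![1, 0; 0, ↑u]
      inv := !![1, 0; 0, ↑u⁻¹]
      val_inv := by simp [one_fin_two]
      inv_val := by simp [one_fin_two] }
  have hconj : !![a, ↑u⁻¹ * b; ↑u * c, d] = D.val * !![a, b; c, d] * D⁻¹.val := by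
    simp only [D, Units.inv_mk, mul_fin_two]
    ext i j
    fin_cases i <;> fin_cases j <;> simp [mul_comm]
  rw [hconj, spectrum.units_conjugate]

theorem maps_spectral_ball_into_itself_general
    (φ : ℂ → ℂ)
    (f : Matrix (Fin 2) (Fin 2) ℂ → Matrix (Fin 2) (Fin 2) ℂ)
    (hf : ∀ x, f x = !![x 0 0, Complex.exp (-φ (x 0 1 * x 1 0)) * x 0 1;
                        Complex.exp (φ (x 0 1 * x 1 0)) * x 1 0, x 1 1])
    (Ω : Set (Matrix (Fin 2) (Fin 2) ℂ))
    (hΩ : Ω = {x | ∀ z ∈ spectrum ℂ x, ‖z‖ < 1}) :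
    Set.MapsTo f Ω Ω := by
  subst hΩ
  intro x hx
  let u : ℂˣ := Units.mk0 (Complex.exp (φ (x 0 1 * x 1 0))) (Complex.exp_ne_zero _)
  have hfx : f x = !![x 0 0, ↑u⁻¹ * x 0 1; ↑u * x 1 0, x 1 1] := by
    rw [hf, Complex.exp_neg, Units.val_inv_eq_inv_val, Units.val_mk0]
  show ∀ z ∈ spectrum ℂ (f x), ‖z‖ < 1
  rwa [hfx, spectrum_fin_two_rescale_offDiag, ← eta_fin_two]

theorem maps_spectral_ball_into_itself
    (φ : ℂ → ℂ) (hφ : Differentiable ℂ φ)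
    (f : Matrix (Fin 2) (Fin 2) ℂ → Matrix (Fin 2) (Fin 2) ℂ)
    (hf : ∀ x, f x = !![x 0 0, Complex.exp (-φ (x 0 1 * x 1 0)) * x 0 1;
                        Complex.exp (φ (x 0 1 * x 1 0)) * x 1 0, x 1 1])
    (Ω : Set (Matrix (Fin 2) (Fin 2) ℂ))
    (hΩ : Ω = {x | ∀ z ∈ spectrum ℂ x, ‖z‖ < 1}) :
    Set.MapsTo f Ω Ω :=
  maps_spectral_ball_into_itself_general φ f hf Ω hΩ
end

section
/- Let φ : ℂ → ℂ be an entire function and define f : M₂(ℂ) → M₂(ℂ) by f(x)₁₁ = x₁₁, f(x)₂₂ = x₂₂, f(x)₁₂ = e^{-φ(x₁₂x₂₁)}·x₁₂, f(x)₂₁ = e^{φ(x₁₂x₂₁)}·x₂₁. Then f restricts to a bijection of the spectral ball Ω onto itself, f is holomorphic on M₂(ℂ), and the inverse of this restriction is also holomorphic. -/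
open Matrix

attribute [local instance] Matrix.normedAddCommGroup Matrix.normedSpace

/-! The map rescales the off-diagonal entries by `e^{∓φ(x₁₂x₂₁)}`, which leaves the diagonal and
the product `x₁₂x₂₁` unchanged. These determine the characteristic polynomial, so the map preserves
the spectrum and hence `Ω`; and the same rescaling with `-φ` undoes it. -/

theorem Matrix.spectrum_fin_two_eq {R : Type*} [CommRing R] {x y : Matrix (Fin 2) (Fin 2) R}
    (h₀₀ : x 0 0 = y 0 0) (h₁₁ : x 1 1 = y 1 1) (h : x 0 1 * x 1 0 = y 0 1 * y 1 0) :
    spectrum R x = spectrum R y := by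
  have det_sub (z : R) (w : Matrix (Fin 2) (Fin 2) R) :
      (algebraMap R _ z - w).det = (z - w 0 0) * (z - w 1 1) - w 0 1 * w 1 0 := by
    simp [det_fin_two, algebraMap_matrix_apply]
  ext z
  simp only [spectrum.mem_iff, isUnit_iff_isUnit_det, det_sub, h₀₀, h₁₁, h]

noncomputable def twist (ψ : ℂ → ℂ) (x : Matrix (Fin 2) (Fin 2) ℂ) : Matrix (Fin 2) (Fin 2) ℂ :=
  !![x 0 0, Complex.exp (-ψ (x 0 1 * x 1 0)) * x 0 1;
     Complex.exp (ψ (x 0 1 * x 1 0)) * x 1 0, x 1 1]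

namespace twist

variable (ψ : ℂ → ℂ) (x : Matrix (Fin 2) (Fin 2) ℂ)

theorem offDiag_mul : twist ψ x 0 1 * twist ψ x 1 0 = x 0 1 * x 1 0 := by
  simp only [twist, of_apply, cons_val', cons_val_zero, cons_val_one, empty_val',
    cons_val_fin_one]
  rw [mul_mul_mul_comm, ← Complex.exp_add, neg_add_cancel, Complex.exp_zero, one_mul]

theorem spectrum_eq : spectrum ℂ (twist ψ x) = spectrum ℂ x :=
  spectrum_fin_two_eq (by simp [twist]) (by simp [twist]) (offDiag_mul ψ x)

theorem neg_twist : twist (-ψ) (twist ψ x) = x := by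
  rw [twist, offDiag_mul]
  ext i j
  fin_cases i <;> fin_cases j <;> simp [twist, ← mul_assoc, ← Complex.exp_add]

theorem twist_neg : twist ψ (twist (-ψ) x) = x := by
  simpa using neg_twist (-ψ) x

theorem differentiable {ψ : ℂ → ℂ} (hψ : Differentiable ℂ ψ) : Differentiable ℂ (twist ψ) := by
  have entry (i j : Fin 2) : Differentiable ℂ fun x : Matrix (Fin 2) (Fin 2) ℂ => x i j :=
    (entryLinearMap ℂ ℂ i j).toContinuousLinearMap.differentiable
  have hψx : Differentiable ℂ fun x : Matrix (Fin 2) (Fin 2) ℂ => ψ (x 0 1 * x 1 0) :=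
    hψ.comp ((entry 0 1).mul (entry 1 0))
  refine differentiable_pi.mpr fun i => differentiable_pi.mpr fun j => ?_
  fin_cases i <;> fin_cases j <;> simp only [twist, of_apply, cons_val', cons_val_zero,
    cons_val_one, empty_val', cons_val_fin_one, Fin.zero_eta, Fin.mk_one]
  · exact entry 0 0
  · exact hψx.neg.cexp.mul (entry 0 1)
  · exact hψx.cexp.mul (entry 1 0)
  · exact entry 1 1

end twist

theorem automorphism_of_spectral_ball
    (φ : ℂ → ℂ) (hφ : Differentiable ℂ φ)
    (f : Matrix (Fin 2) (Fin 2) ℂ → Matrix (Fin 2) (Fin 2) ℂ)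
    (hf : ∀ x, f x = !![x 0 0, Complex.exp (-φ (x 0 1 * x 1 0)) * x 0 1;
                        Complex.exp (φ (x 0 1 * x 1 0)) * x 1 0, x 1 1])
    (Ω : Set (Matrix (Fin 2) (Fin 2) ℂ))
    (hΩ : Ω = {x | ∀ z ∈ spectrum ℂ x, ‖z‖ < 1}) :
    Set.BijOn f Ω Ω ∧ Differentiable ℂ f ∧
      ∃ g : Matrix (Fin 2) (Fin 2) ℂ → Matrix (Fin 2) (Fin 2) ℂ,
        Set.InvOn g f Ω Ω ∧ DifferentiableOn ℂ g Ω := by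
  obtain rfl : f = twist φ := funext hf
  have mapsTo (ψ : ℂ → ℂ) : Set.MapsTo (twist ψ) Ω Ω := by
    subst hΩ
    intro x hx z hz
    exact hx z (twist.spectrum_eq ψ x ▸ hz)
  have hinv : Set.InvOn (twist (-φ)) (twist φ) Ω Ω :=
    ⟨fun x _ => twist.neg_twist φ x, fun x _ => twist.twist_neg φ x⟩
  exact ⟨hinv.bijOn (mapsTo φ) (mapsTo (-φ)), twist.differentiable hφ, twist (-φ), hinv,
    (twist.differentiable hφ.neg).differentiableOn⟩
end

section
/- Let φ : ℂ → ℂ be a non-constant entire function and define f : M₂(ℂ) → M₂(ℂ) by f(x)₁₁ = x₁₁, f(x)₂₂ = x₂₂, f(x)₁₂ = e^{-φ(x₁₂x₂₁)}·x₁₂, f(x)₂₁ = e^{φ(x₁₂x₂₁)}·x₂₁. Let 𝔖 = {x ∈ M₂(ℂ) : det x = 0 and tr x = 1/2}. Then there is no invertible matrix n ∈ M₂(ℂ) such that f(x) = n·x·n⁻¹ for all x ∈ 𝔖. -/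
/-!
On the fiber, `f x = n * x * n⁻¹` means `f x * n = n * x`. At `!![0, 0; 1, 1/2]` this forces
`n 0 1 = 0`; at `!![a, 1; z, 1/2 - a]`, where `a * (1/2 - a) = z` is solvable for every `z`, it
then gives `exp (-φ z) * n 1 1 = n 0 0`. As `n` is invertible, `n 1 1 ≠ 0`, so `exp ∘ (-φ)` is
constant, and a differentiable function with constant exponential is constant.
-/

open Matrix

noncomputable def expTwist (φ : ℂ → ℂ) (x : Matrix (Fin 2) (Fin 2) ℂ) :
    Matrix (Fin 2) (Fin 2) ℂ :=
  !![x 0 0, Complex.exp (-φ (x 0 1 * x 1 0)) * x 0 1;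
     Complex.exp (φ (x 0 1 * x 1 0)) * x 1 0, x 1 1]

theorem Differentiable.eq_of_cexp_eq_const {φ : ℂ → ℂ} (hφ : Differentiable ℂ φ) {c : ℂ}
    (h : ∀ z, Complex.exp (φ z) = c) (z w : ℂ) : φ z = φ w := by
  have hderiv : ∀ z, _root_.deriv φ z = 0 := fun z ↦ by
    have hexp := (hφ z).hasDerivAt.cexp
    have hzero : _root_.deriv (fun z ↦ Complex.exp (φ z)) z = 0 := by simp [h]
    simpa [hexp.deriv, Complex.exp_ne_zero] using hzero
  exact is_const_of_deriv_eq_zero hφ hderiv z w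

theorem det_fin_two_of_half_sub_eq_zero {a b c : ℂ} (h : b * c = a * (1 / 2 - a)) :
    (!![a, b; c, 1 / 2 - a] : Matrix (Fin 2) (Fin 2) ℂ).det = 0 := by
  rw [det_fin_two_of]; linear_combination -h

theorem trace_fin_two_of_half_sub (a b c : ℂ) :
    (!![a, b; c, 1 / 2 - a] : Matrix (Fin 2) (Fin 2) ℂ).trace = 1 / 2 := by
  rw [trace_fin_two_of]; ring

theorem exists_mul_half_sub_eq (z : ℂ) : ∃ a : ℂ, a * (1 / 2 - a) = z := by
  obtain ⟨w, hw⟩ := IsAlgClosed.exists_pow_nat_eq (1 / 16 - z) two_pos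
  exact ⟨1 / 4 + w, by linear_combination -hw⟩

section Intertwiner

variable {φ : ℂ → ℂ} {n : Matrix (Fin 2) (Fin 2) ℂ}
  (hn : ∀ x : Matrix (Fin 2) (Fin 2) ℂ, x.det = 0 → x.trace = 1 / 2 → expTwist φ x * n = n * x)
include hn

theorem intertwines_of_mul_eq {a b c : ℂ} (h : b * c = a * (1 / 2 - a)) :
    expTwist φ !![a, b; c, 1 / 2 - a] * n = n * !![a, b; c, 1 / 2 - a] :=
  hn _ (det_fin_two_of_half_sub_eq_zero h) (trace_fin_two_of_half_sub a b c)

theorem upper_right_eq_zero_of_intertwines : n 0 1 = 0 := by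
  have h := congrFun₂ (intertwines_of_mul_eq hn (a := 0) (b := 0) (c := 1) (by ring)) 1 1
  simp [expTwist, mul_apply, Fin.sum_univ_two] at h
  simpa [Complex.exp_ne_zero] using (by linear_combination h : Complex.exp (φ 0) * n 0 1 = 0)

theorem cexp_neg_mul_eq_of_intertwines (z : ℂ) : Complex.exp (-φ z) * n 1 1 = n 0 0 := by
  obtain ⟨a, ha⟩ := exists_mul_half_sub_eq z
  have h := congrFun₂ (intertwines_of_mul_eq hn (b := 1) (c := z) (by rw [one_mul, ha])) 0 1
  simpa [expTwist, mul_apply, Fin.sum_univ_two, upper_right_eq_zero_of_intertwines hn] using h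

end Intertwiner

theorem not_conjugation_on_fiber
    (φ : ℂ → ℂ) (hφ : Differentiable ℂ φ) (hnc : ¬ ∃ c : ℂ, ∀ z : ℂ, φ z = c)
    (f : Matrix (Fin 2) (Fin 2) ℂ → Matrix (Fin 2) (Fin 2) ℂ)
    (hf : ∀ x, f x = !![x 0 0, Complex.exp (-φ (x 0 1 * x 1 0)) * x 0 1;
                        Complex.exp (φ (x 0 1 * x 1 0)) * x 1 0, x 1 1]) :
    ¬ ∃ n : Matrix (Fin 2) (Fin 2) ℂ, IsUnit n ∧
        ∀ x : Matrix (Fin 2) (Fin 2) ℂ, x.det = 0 → x.trace = 1 / 2 → f x = n * x * n⁻¹ := by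
  rintro ⟨n, hn, h⟩
  have hdet : IsUnit n.det := (isUnit_iff_isUnit_det n).mp hn
  have hint : ∀ x : Matrix (Fin 2) (Fin 2) ℂ, x.det = 0 → x.trace = 1 / 2 →
      expTwist φ x * n = n * x := fun x hd ht ↦ by
    rw [expTwist, ← hf, h x hd ht, nonsing_inv_mul_cancel_right _ _ hdet]
  have h11 : n 1 1 ≠ 0 := fun h11 ↦ hdet.ne_zero <| by
    rw [det_fin_two, upper_right_eq_zero_of_intertwines hint, h11]; ring
  have hconst : ∀ z, Complex.exp (-φ z) = n 0 0 / n 1 1 := fun z ↦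
    eq_div_of_mul_eq h11 (cexp_neg_mul_eq_of_intertwines hint z)
  exact hnc ⟨φ 0, fun z ↦ neg_inj.mp (hφ.neg.eq_of_cexp_eq_const hconst z 0)⟩
end

section
/- Let a : ℂ → ℂ be an entire function and for x ∈ M₂(ℂ) set u(x) = [[1, 0], [a(x₁₂), 1]] and f(x) = u(x)·x·u(x)⁻¹. Then f maps the spectral ball Ω into Ω, and the map g(x) = u(x)⁻¹·x·u(x) satisfies g(f(x)) = x and f(g(x)) = x for all x ∈ M₂(ℂ); in particular f restricts to a bijection of Ω onto itself. -/
/-!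
Conjugating by the lower unitriangular matrix `u(x)` does not change the `(0,1)`-entry of `x`,
so `u ∘ f = u` and `u ∘ g = u`; hence `f` and `g` are conjugations by one and the same
invertible matrix in opposite directions, and are mutually inverse. Conjugation preserves the
spectrum, so both maps send the spectral ball into itself.
-/

open Matrix

namespace Matrix

section Conjugation

variable {n R : Type*} [Fintype n] [DecidableEq n] [CommRing R] {A : Matrix n n R}

theorem nonsing_inv_mul_conj_mul (hA : IsUnit A.det) (x : Matrix n n R) :
    A⁻¹ * (A * x * A⁻¹) * A = x := by
  rw [Matrix.mul_assoc, nonsing_inv_mul_cancel_right _ _ hA, nonsing_inv_mul_cancel_left _ _ hA]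

theorem mul_conj_nonsing_inv_mul (hA : IsUnit A.det) (x : Matrix n n R) :
    A * (A⁻¹ * x * A) * A⁻¹ = x := by
  rw [Matrix.mul_assoc, mul_nonsing_inv_cancel_right _ _ hA, mul_nonsing_inv_cancel_left _ _ hA]

theorem spectrum_mul_mul_nonsing_inv (hA : IsUnit A.det) (x : Matrix n n R) :
    spectrum R (A * x * A⁻¹) = spectrum R x := by
  obtain ⟨U, rfl⟩ := (isUnit_iff_isUnit_det A).mpr hA
  rw [← coe_units_inv, spectrum.units_conjugate]

theorem spectrum_nonsing_inv_mul_mul (hA : IsUnit A.det) (x : Matrix n n R) :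
    spectrum R (A⁻¹ * x * A) = spectrum R x := by
  simpa [nonsing_inv_nonsing_inv _ hA] using
    spectrum_mul_mul_nonsing_inv ((isUnit_nonsing_inv_det_iff).mpr hA) x

end Conjugation

section LowerUnitriangular

variable {R : Type*} [CommRing R]

theorem det_lowerUnitriangular (c : R) : (!![1, 0; c, 1] : Matrix (Fin 2) (Fin 2) R).det = 1 := by
  simp [det_fin_two]

theorem inv_lowerUnitriangular (c : R) :
    (!![1, 0; c, 1] : Matrix (Fin 2) (Fin 2) R)⁻¹ = !![1, 0; -c, 1] := by
  rw [inv_def, det_lowerUnitriangular, adjugate_fin_two_of]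
  simp

theorem lowerUnitriangular_conj_apply_zero_one (c : R) (x : Matrix (Fin 2) (Fin 2) R) :
    (!![1, 0; c, 1] * x * (!![1, 0; c, 1])⁻¹) 0 1 = x 0 1 := by
  simp [inv_lowerUnitriangular, mul_apply, vecMul, dotProduct, Fin.sum_univ_two]

theorem lowerUnitriangular_inv_conj_apply_zero_one (c : R) (x : Matrix (Fin 2) (Fin 2) R) :
    ((!![1, 0; c, 1])⁻¹ * x * !![1, 0; c, 1]) 0 1 = x 0 1 := by
  simpa [inv_lowerUnitriangular] using lowerUnitriangular_conj_apply_zero_one (-c) x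

end LowerUnitriangular

end Matrix

theorem unipotent_conjugation_automorphism_general
    (a : ℂ → ℂ)
    (u : Matrix (Fin 2) (Fin 2) ℂ → Matrix (Fin 2) (Fin 2) ℂ)
    (hu : ∀ x, u x = !![1, 0; a (x 0 1), 1])
    (f g : Matrix (Fin 2) (Fin 2) ℂ → Matrix (Fin 2) (Fin 2) ℂ)
    (hf : ∀ x, f x = u x * x * (u x)⁻¹)
    (hg : ∀ x, g x = (u x)⁻¹ * x * u x)
    (Ω : Set (Matrix (Fin 2) (Fin 2) ℂ))
    (hΩ : Ω = {x | ∀ z ∈ spectrum ℂ x, ‖z‖ < 1}) :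
    Set.MapsTo f Ω Ω ∧
    (∀ x : Matrix (Fin 2) (Fin 2) ℂ, g (f x) = x ∧ f (g x) = x) ∧
    Set.BijOn f Ω Ω := by
  have hdet : ∀ x, IsUnit (u x).det := fun x => by simp [hu]
  have huf : ∀ x, u (f x) = u x := fun x => by
    rw [hu, hu, hf, hu, lowerUnitriangular_conj_apply_zero_one]
  have hug : ∀ x, u (g x) = u x := fun x => by
    rw [hu, hu, hg, hu, lowerUnitriangular_inv_conj_apply_zero_one]
  have hgf : ∀ x, g (f x) = x := fun x => by
    rw [hg, huf, hf, nonsing_inv_mul_conj_mul (hdet x)]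
  have hfg : ∀ x, f (g x) = x := fun x => by
    rw [hf, hug, hg, mul_conj_nonsing_inv_mul (hdet x)]
  have hf_maps : Set.MapsTo f Ω Ω := fun x hx => by
    subst hΩ
    simpa [hf, spectrum_mul_mul_nonsing_inv (hdet x)] using hx
  have hg_maps : Set.MapsTo g Ω Ω := fun x hx => by
    subst hΩ
    simpa [hg, spectrum_nonsing_inv_mul_mul (hdet x)] using hx
  exact ⟨hf_maps, fun x => ⟨hgf x, hfg x⟩,
    Set.InvOn.bijOn ⟨fun x _ => hgf x, fun x _ => hfg x⟩ hf_maps hg_maps⟩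

theorem unipotent_conjugation_automorphism
    (a : ℂ → ℂ) (ha : Differentiable ℂ a)
    (u : Matrix (Fin 2) (Fin 2) ℂ → Matrix (Fin 2) (Fin 2) ℂ)
    (hu : ∀ x, u x = !![1, 0; a (x 0 1), 1])
    (f g : Matrix (Fin 2) (Fin 2) ℂ → Matrix (Fin 2) (Fin 2) ℂ)
    (hf : ∀ x, f x = u x * x * (u x)⁻¹)
    (hg : ∀ x, g x = (u x)⁻¹ * x * u x)
    (Ω : Set (Matrix (Fin 2) (Fin 2) ℂ))
    (hΩ : Ω = {x | ∀ z ∈ spectrum ℂ x, ‖z‖ < 1}) :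
    Set.MapsTo f Ω Ω ∧
    (∀ x : Matrix (Fin 2) (Fin 2) ℂ, g (f x) = x ∧ f (g x) = x) ∧
    Set.BijOn f Ω Ω :=
  unipotent_conjugation_automorphism_general a u hu f g hf hg Ω hΩ
end

section
/- Let a : ℂ → ℂ be an entire function and for x ∈ M₂(ℂ) set u(x) = [[1, 0], [a(x₁₂), 1]] and f(x) = u(x)·x·u(x)⁻¹. Then f is holomorphic on M₂(ℂ), and its restriction to the spectral ball Ω is a bijection of Ω onto itself whose inverse x ↦ u(x)⁻¹·x·u(x) is holomorphic. -/
open Matrix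

attribute [local instance] Matrix.normedAddCommGroup Matrix.normedSpace

/-!
In 1-based notation `u x = 1 + a(x₁₂) E₂₁` is an elementary transvection `T c` (Mathlib's
`transvection 1 0 c`), with inverse `T (-c)`. Conjugating by `T c` adds `c` times row 1 to row 2 and
subtracts `c` times column 2 from column 1, so it leaves the entry `x₁₂` alone. Hence `u` is
constant along `f` and `g`, which gives `g ∘ f = f ∘ g = id`; being conjugations, `f` and `g`
preserve the spectrum and with it the spectral ball. Each entry of `f x` is a polynomial in the
entries of `x` and in `a x₁₂`, hence holomorphic.
-/

namespace Matrix

section Transvection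

variable {n R : Type*} [Fintype n] [DecidableEq n] [CommRing R] {i j : n}

lemma transvection_mul_transvection_neg (h : i ≠ j) (c : R) :
    transvection i j c * transvection i j (-c) = 1 := by
  rw [transvection_mul_transvection_same i j h, add_neg_cancel, transvection_zero]

lemma inv_transvection (h : i ≠ j) (c : R) : (transvection i j c)⁻¹ = transvection i j (-c) :=
  inv_eq_right_inv (transvection_mul_transvection_neg h c)

def transvectionUnit (h : i ≠ j) (c : R) : (Matrix n n R)ˣ where
  val := transvection i j c
  inv := transvection i j (-c)
  val_inv := transvection_mul_transvection_neg h c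
  inv_val := by simpa using transvection_mul_transvection_neg h (-c)

def transvectionConj (i j : n) (a : R → R) (x : Matrix n n R) : Matrix n n R :=
  transvection i j (a (x j i)) * x * transvection i j (-a (x j i))

lemma transvectionConj_apply_swap (h : i ≠ j) (a : R → R) (x : Matrix n n R) :
    transvectionConj i j a x j i = x j i := by
  simp [transvectionConj, h, h.symm]

lemma transvectionConj_neg_transvectionConj (h : i ≠ j) (a : R → R) (x : Matrix n n R) :
    transvectionConj i j (-a) (transvectionConj i j a x) = x := by
  rw [transvectionConj, transvectionConj_apply_swap h, transvectionConj, Pi.neg_apply, neg_neg]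
  simp only [← mul_assoc, transvection_mul_transvection_same i j h, neg_add_cancel,
    transvection_zero, one_mul]
  rw [mul_assoc, transvection_mul_transvection_same i j h, neg_add_cancel, transvection_zero,
    mul_one]

lemma spectrum_transvectionConj (h : i ≠ j) (a : R → R) (x : Matrix n n R) :
    spectrum R (transvectionConj i j a x) = spectrum R x :=
  spectrum.units_conjugate (u := transvectionUnit h (a (x j i)))

end Transvection

end Matrix

section Differentiability

variable {𝕜 E : Type*} [NontriviallyNormedField 𝕜] [NormedAddCommGroup E] [NormedSpace 𝕜 E]

lemma differentiable_matrix_iff {m n : Type*} [Fintype m] [Fintype n] {A : E → Matrix m n 𝕜} :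
    Differentiable 𝕜 A ↔ ∀ i j, Differentiable 𝕜 fun x => A x i j :=
  (differentiable_pi (F' := fun _ : m => n → 𝕜) (Φ := A)).trans
    (forall_congr' fun _ => differentiable_pi)

lemma Differentiable.matrix_mul {m n p : Type*} [Fintype m] [Fintype n] [Fintype p]
    {A : E → Matrix m n 𝕜} {B : E → Matrix n p 𝕜}
    (hA : Differentiable 𝕜 A) (hB : Differentiable 𝕜 B) :
    Differentiable 𝕜 fun x => A x * B x := by
  refine differentiable_matrix_iff.mpr fun i k => ?_
  simp only [mul_apply]
  exact Differentiable.fun_sum fun l _ =>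
    (differentiable_matrix_iff.mp hA i l).mul (differentiable_matrix_iff.mp hB l k)

lemma differentiable_matrix_apply {m n : Type*} [Fintype m] [Fintype n] (i : m) (j : n) :
    Differentiable 𝕜 fun x : Matrix m n 𝕜 => x i j :=
  differentiable_matrix_iff.mp differentiable_id i j

variable {n : Type*} [Fintype n] [DecidableEq n]

lemma Differentiable.matrix_transvection {c : E → 𝕜} (hc : Differentiable 𝕜 c) (i j : n) :
    Differentiable 𝕜 fun x => transvection i j (c x) := by
  have h : ∀ x, transvection i j (c x) = 1 + c x • single i j (1 : 𝕜) := fun x => by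
    rw [transvection, smul_single, smul_eq_mul, mul_one]
  simp only [h]
  exact (differentiable_const 1).fun_add (hc.smul_const _)

lemma Differentiable.matrix_transvectionConj {a : 𝕜 → 𝕜} (ha : Differentiable 𝕜 a)
    (i j : n) :
    Differentiable 𝕜 (transvectionConj i j a) := by
  have hc := ha.comp (differentiable_matrix_apply j i)
  exact ((hc.matrix_transvection i j).matrix_mul differentiable_id).matrix_mul
    (hc.neg.matrix_transvection i j)

end Differentiability

theorem unipotent_conjugation_holomorphic_automorphism
    (a : ℂ → ℂ) (ha : Differentiable ℂ a)
    (u : Matrix (Fin 2) (Fin 2) ℂ → Matrix (Fin 2) (Fin 2) ℂ)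
    (hu : ∀ x, u x = !![1, 0; a (x 0 1), 1])
    (f g : Matrix (Fin 2) (Fin 2) ℂ → Matrix (Fin 2) (Fin 2) ℂ)
    (hf : ∀ x, f x = u x * x * (u x)⁻¹)
    (hg : ∀ x, g x = (u x)⁻¹ * x * u x)
    (Ω : Set (Matrix (Fin 2) (Fin 2) ℂ))
    (hΩ : Ω = {x | ∀ z ∈ spectrum ℂ x, ‖z‖ < 1}) :
    Differentiable ℂ f ∧ Set.BijOn f Ω Ω ∧ Set.InvOn g f Ω Ω ∧ DifferentiableOn ℂ g Ω := by
  have h10 : (1 : Fin 2) ≠ 0 := one_ne_zero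
  have hu' : ∀ x, u x = transvection 1 0 (a (x 0 1)) := fun x => by
    rw [hu]; ext i j; fin_cases i <;> fin_cases j <;> simp [transvection]
  obtain rfl : f = transvectionConj 1 0 a := funext fun x => by
    rw [hf, hu', inv_transvection h10]; rfl
  obtain rfl : g = transvectionConj 1 0 (-a) := funext fun x => by
    rw [hg, hu', inv_transvection h10, transvectionConj, Pi.neg_apply, neg_neg]
  have hmaps : ∀ b, Set.MapsTo (transvectionConj 1 0 b) Ω Ω := fun b x hx => by
    subst hΩ; rwa [Set.mem_ofPred_eq, spectrum_transvectionConj h10]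
  have hinv : Set.InvOn (transvectionConj 1 0 (-a)) (transvectionConj 1 0 a) Ω Ω :=
    ⟨fun x _ => transvectionConj_neg_transvectionConj h10 a x,
      fun x _ => by simpa using transvectionConj_neg_transvectionConj h10 (-a) x⟩
  exact ⟨ha.matrix_transvectionConj 1 0, hinv.bijOn (hmaps a) (hmaps (-a)), hinv,
    (ha.neg.matrix_transvectionConj 1 0).differentiableOn⟩
end

section
/- Let a : ℂ → ℂ be a non-constant entire function and for x ∈ M₂(ℂ) set u(x) = [[1, 0], [a(x₁₂), 1]] and f(x) = u(x)·x·u(x)⁻¹. Then there is no map v : Ω → GL₂(ℂ) that is conjugate invariant (i.e. v(q⁻¹·x·q) = v(x) for every x ∈ Ω and every invertible q ∈ M₂(ℂ)) and satisfies f(x) = v(x)⁻¹·x·v(x) for every x ∈ Ω. -/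
/-!
All nonzero multiples `t • N` of the nilpotent `N = !![0, 1; 0, 0]` lie in `Ω` and are conjugate to
`N`, so a conjugate-invariant `v` takes the single value `w = v N` on them. Comparing `(0,0)`
entries in `f (t • N) = w⁻¹ * (t • N) * w` gives `-t * a t = t * c` with `c = (w⁻¹ * N * w) 0 0`,
so `a` is constant on `ℂ \ {0}`, hence constant by continuity.
-/

open Matrix

theorem spectrum.eq_zero_of_isNilpotent {𝕜 A : Type*} [Field 𝕜] [Ring A] [Algebra 𝕜 A]
    {a : A} (ha : IsNilpotent a) {k : 𝕜} (hk : k ∈ spectrum 𝕜 a) : k = 0 := by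
  obtain ⟨n, hn⟩ := ha
  cases subsingleton_or_nontrivial A
  · simp [spectrum.of_subsingleton] at hk
  have hkn := spectrum.pow_mem_pow a n hk
  rw [hn, spectrum.zero_eq, Set.mem_singleton_iff] at hkn
  exact pow_eq_zero_iff'.mp hkn |>.1

namespace Matrix

variable {R : Type*} [CommRing R]

theorem isNilpotent_single_zero_one_fin_two : IsNilpotent !![(0 : R), 1; 0, 0] :=
  ⟨2, by ext i j; fin_cases i <;> fin_cases j <;> simp [sq]⟩

theorem inv_lower_unitriangular_fin_two (s : R) : (!![1, 0; s, 1])⁻¹ = !![1, 0; -s, 1] :=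
  inv_eq_left_inv <| by simp [one_fin_two]

theorem conj_lower_unitriangular_fin_two_apply_zero_zero (s : R) (x : Matrix (Fin 2) (Fin 2) R) :
    (!![1, 0; s, 1] * x * (!![1, 0; s, 1])⁻¹) 0 0 = x 0 0 - s * x 0 1 := by
  rw [inv_lower_unitriangular_fin_two, eta_fin_two x, mul_fin_two, mul_fin_two]
  simp [sub_eq_add_neg, mul_comm]

theorem conj_diag_one_fin_two {K : Type*} [Field K] {t : K} (ht : t ≠ 0) :
    (!![1, 0; 0, t])⁻¹ * !![0, 1; 0, 0] * !![1, 0; 0, t] = t • !![(0 : K), 1; 0, 0] := by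
  rw [inv_eq_left_inv (B := !![1, 0; 0, t⁻¹]) (by simp [one_fin_two, ht])]
  ext i j; fin_cases i <;> fin_cases j <;> simp

theorem isUnit_diag_one_fin_two {K : Type*} [Field K] {t : K} (ht : t ≠ 0) :
    IsUnit !![(1 : K), 0; 0, t] := by
  simpa [isUnit_iff_isUnit_det] using ht

end Matrix

theorem unipotent_not_conjugate_invariant
    (a : ℂ → ℂ) (ha : Differentiable ℂ a) (hnc : ¬ ∃ c : ℂ, ∀ z : ℂ, a z = c)
    (u : Matrix (Fin 2) (Fin 2) ℂ → Matrix (Fin 2) (Fin 2) ℂ)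
    (hu : ∀ x, u x = !![1, 0; a (x 0 1), 1])
    (f : Matrix (Fin 2) (Fin 2) ℂ → Matrix (Fin 2) (Fin 2) ℂ)
    (hf : ∀ x, f x = u x * x * (u x)⁻¹)
    (Ω : Set (Matrix (Fin 2) (Fin 2) ℂ))
    (hΩ : Ω = {x | ∀ z ∈ spectrum ℂ x, ‖z‖ < 1}) :
    ¬ ∃ v : Matrix (Fin 2) (Fin 2) ℂ → Matrix (Fin 2) (Fin 2) ℂ,
        (∀ x ∈ Ω, IsUnit (v x)) ∧
        (∀ x ∈ Ω, ∀ q : Matrix (Fin 2) (Fin 2) ℂ, IsUnit q → v (q⁻¹ * x * q) = v x) ∧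
        (∀ x ∈ Ω, f x = (v x)⁻¹ * x * v x) := by
  subst hΩ
  rintro ⟨v, -, hv_conj, hv_eq⟩
  set N : Matrix (Fin 2) (Fin 2) ℂ := !![0, 1; 0, 0]
  have hN_mem (t : ℂ) : t • N ∈ {x | ∀ z ∈ spectrum ℂ x, ‖z‖ < 1} := fun z hz ↦ by
    simp [spectrum.eq_zero_of_isNilpotent (isNilpotent_single_zero_one_fin_two.smul t) hz]
  have hv_const (t : ℂ) (ht : t ≠ 0) : v (t • N) = v N := by
    rw [← conj_diag_one_fin_two ht,
      hv_conj N (by simpa using hN_mem 1) _ (isUnit_diag_one_fin_two ht)]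
  set c := ((v N)⁻¹ * N * v N) 0 0
  have ha_eq (t : ℂ) (ht : t ≠ 0) : a t = -c := by
    have h := congrArg (· 0 0) (hv_eq _ (hN_mem t))
    simp only [hf, hu, conj_lower_unitriangular_fin_two_apply_zero_zero, hv_const t ht,
      Matrix.mul_smul, Matrix.smul_mul, Matrix.smul_apply, smul_eq_mul, N, of_apply, cons_val',
      cons_val_zero, cons_val_fin_one, cons_val_one, mul_one, zero_sub, mul_neg] at h
    exact mul_left_cancel₀ ht (by linear_combination -h)
  exact hnc ⟨-c, congrFun <| ha.continuous.ext_on (dense_compl_singleton 0) continuous_const ha_eq⟩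
end

section
/- Let a : ℂ → ℂ be a non-constant entire function and for x ∈ M₂(ℂ) set u(x) = [[1, 0], [a(x₁₂), 1]] and f(x) = u(x)·x·u(x)⁻¹. Let 𝔖 = {x ∈ M₂(ℂ) : det x = 0 and tr x = 1/2}. Then there is no invertible matrix n ∈ M₂(ℂ) such that f(x) = n·x·n⁻¹ for all x ∈ 𝔖. -/
/-!
Test the conjugation on the matrices `x = !![1/2, t; 0, 0]` of the fiber. If `n` conjugates like
`u x = !![1, 0; a t, 1]`, then comparing the `(0, 0)` entries of `f x * n = n * x` gives
`t * (n₁₀ - a t * n₀₀) = 0` for every `t`. Taking `t = 1` shows `n₀₀ ≠ 0` (else the first column of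
`n` vanishes), so `a t = n₁₀ / n₀₀` for all `t ≠ 0`, and by continuity `a` is constant.
-/

open Matrix

namespace Matrix

variable {R : Type*} [CommRing R]

theorem mul_sub_mul_eq_zero_of_lowerUnitriangular_conj_eq {c s t : R} {n : Matrix (Fin 2) (Fin 2) R}
    (hn : IsUnit n.det)
    (h : !![1, 0; c, 1] * !![s, t; 0, 0] * !![1, 0; c, 1]⁻¹ = n * !![s, t; 0, 0] * n⁻¹) :
    t * (n 1 0 - c * n 0 0) = 0 := by
  have hcomm := congrArg (· * n) h
  simp only [nonsing_inv_mul_cancel_right _ _ hn, inv_lowerUnitriangular] at hcomm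
  have h00 : (s + -(t * c)) * n 0 0 + t * n 1 0 = n 0 0 * s := by
    simpa [mul_apply, Fin.sum_univ_two] using congrFun₂ hcomm 0 0
  linear_combination h00

end Matrix

theorem unipotent_not_conjugation_on_fiber
    (a : ℂ → ℂ) (ha : Differentiable ℂ a) (hnc : ¬ ∃ c : ℂ, ∀ z : ℂ, a z = c)
    (u : Matrix (Fin 2) (Fin 2) ℂ → Matrix (Fin 2) (Fin 2) ℂ)
    (hu : ∀ x, u x = !![1, 0; a (x 0 1), 1])
    (f : Matrix (Fin 2) (Fin 2) ℂ → Matrix (Fin 2) (Fin 2) ℂ)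
    (hf : ∀ x, f x = u x * x * (u x)⁻¹) :
    ¬ ∃ n : Matrix (Fin 2) (Fin 2) ℂ, IsUnit n ∧
        ∀ x : Matrix (Fin 2) (Fin 2) ℂ, x.det = 0 → x.trace = 1 / 2 → f x = n * x * n⁻¹ := by
  rintro ⟨n, hn, h⟩
  have hdet : IsUnit n.det := n.isUnit_iff_isUnit_det.mp hn
  have key (t : ℂ) : t * (n 1 0 - a t * n 0 0) = 0 := by
    have hx := h !![1 / 2, t; 0, 0] (by simp [det_fin_two_of]) (by simp [trace_fin_two_of])
    rw [hf, hu] at hx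
    exact mul_sub_mul_eq_zero_of_lowerUnitriangular_conj_eq hdet hx
  have hn00 : n 0 0 ≠ 0 := by
    intro hzero
    have hn10 : n 1 0 = 0 := by simpa [hzero] using key 1
    exact hdet.ne_zero (by rw [det_fin_two, hzero, hn10]; ring)
  have hconst : a = fun _ => n 1 0 / n 0 0 :=
    ha.continuous.ext_on (dense_compl_singleton 0) continuous_const fun t ht =>
      (eq_div_iff hn00).mpr (sub_eq_zero.mp ((mul_eq_zero.mp (key t)).resolve_left ht)).symm
  exact hnc ⟨_, congrFun hconst⟩
end
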